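/- arXiv:2311.01226 — 2 statements merged into one kernel-verified Lean document; each statement's English description precedes it below -/
import Mathlib

section
/- Let X, Y be finite sets, p, q probability mass functions with full support, and let K pairs (x_k, y_k), k = 1..K, of distinct keypoints be given with p(x_k) = q(y_k) for all k. Define the mask m : X × Y → {0,1} by m(x_k, y_k) = 1, m(x_k, y) = 0 for y ≠ y_k, m(x, y_k) = 0 for x ≠ x_k, and m(x,y) = 1 if neither x nor y is a keypoint. Then there exists a coupling π of p and q of the form π = m ⊗ π̃ (i.e., π(x,y) = m(x,y) π̃(x,y) for some nonnegative π̃); explicitly, the mixture π(x,y) = Σ_k p(x_k)·𝟙[(x,y)=(x_k,y_k)] + π_u(x,y), where π_u is the independent coupling of the restrictions of p and q to non-keypoints (renormalized), works. -/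
open Finset

theorem stmt16 {X Y : Type*} [Fintype X] [Fintype Y] [DecidableEq X] [DecidableEq Y]
    (p : X → ℝ) (q : Y → ℝ)
    (hp0 : ∀ x, 0 < p x) (hp1 : ∑ x, p x = 1)
    (hq0 : ∀ y, 0 < q y) (hq1 : ∑ y, q y = 1)
    (K : ℕ) (xs : Fin K → X) (ys : Fin K → Y)
    (hxs : Function.Injective xs) (hys : Function.Injective ys)
    (hmass : ∀ k, p (xs k) = q (ys k)) :
    ∃ π : X → Y → ℝ, (∀ x y, 0 ≤ π x y) ∧
      (∀ x, ∑ y, π x y = p x) ∧ (∀ y, ∑ x, π x y = q y) ∧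
      (∀ x y, ¬((∃ k, x = xs k ∧ y = ys k) ∨
        ((∀ k, x ≠ xs k) ∧ (∀ k, y ≠ ys k))) → π x y = 0) := by
  classical
  set A : Finset X := univ.filter (fun x => ∀ k, x ≠ xs k) with hA
  set B : Finset Y := univ.filter (fun y => ∀ k, y ≠ ys k) with hB
  set s : ℝ := ∑ x ∈ A, p x with hs
  set t : ℝ := ∑ y ∈ B, q y with ht
  have hAc : (univ.filter (fun x => ¬ ∀ k, x ≠ xs k)) = Finset.image xs univ := by
    ext x
    simp only [mem_filter, mem_univ, true_and, mem_image, not_forall, not_ne_iff, eq_comm]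
  have hBc : (univ.filter (fun y => ¬ ∀ k, y ≠ ys k)) = Finset.image ys univ := by
    ext y
    simp only [mem_filter, mem_univ, true_and, mem_image, not_forall, not_ne_iff, eq_comm]
  have hsval : s = 1 - ∑ k, p (xs k) := by
    have h1 := Finset.sum_filter_add_sum_filter_not univ (fun x => ∀ k, x ≠ xs k) p
    rw [hAc, Finset.sum_image (fun a _ b _ h => hxs h), hp1] at h1
    rw [hs, hA]; linarith
  have htval : t = 1 - ∑ k, q (ys k) := by
    have h1 := Finset.sum_filter_add_sum_filter_not univ (fun y => ∀ k, y ≠ ys k) q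
    rw [hBc, Finset.sum_image (fun a _ b _ h => hys h), hq1] at h1
    rw [ht, hB]; linarith
  have hst : s = t := by
    rw [hsval, htval]
    congr 1
    exact Finset.sum_congr rfl fun k _ => hmass k
  have hs0 : 0 ≤ s := Finset.sum_nonneg fun x _ => (hp0 x).le
  refine ⟨fun x y => if ∃ k, x = xs k ∧ y = ys k then p x
      else if (∀ k, x ≠ xs k) ∧ (∀ k, y ≠ ys k) then p x * q y / s else 0, ?_, ?_, ?_, ?_⟩
  · intro x y
    dsimp only
    split_ifs
    · exact (hp0 x).le
    · exact div_nonneg (mul_nonneg (hp0 x).le (hq0 y).le) hs0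
    · exact le_refl 0
  · intro x
    dsimp only
    by_cases hx : ∃ j, x = xs j
    · obtain ⟨j, rfl⟩ := hx
      have key : ∀ y, (if ∃ k, xs j = xs k ∧ y = ys k then p (xs j)
          else if (∀ k, xs j ≠ xs k) ∧ (∀ k, y ≠ ys k) then p (xs j) * q y / s else 0)
          = if y = ys j then p (xs j) else 0 := by
        intro y
        by_cases hy : y = ys j
        · subst hy
          rw [if_pos ⟨j, rfl, rfl⟩, if_pos rfl]
        · rw [if_neg, if_neg, if_neg hy]
          · rintro ⟨h1, -⟩; exact h1 j rfl
          · rintro ⟨k, h1, h2⟩; exact hy (by rw [h2, hxs h1])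
      rw [Finset.sum_congr rfl fun y _ => key y, Finset.sum_ite_eq' univ (ys j)]
      simp
    · push_neg at hx
      have hxA : x ∈ A := by simp [hA, hx]
      have hspos : 0 < s := Finset.sum_pos (fun i _ => hp0 i) ⟨x, hxA⟩
      have key : ∀ y, (if ∃ k, x = xs k ∧ y = ys k then p x
          else if (∀ k, x ≠ xs k) ∧ (∀ k, y ≠ ys k) then p x * q y / s else 0)
          = if (∀ k, y ≠ ys k) then p x * q y / s else 0 := by
        intro y
        rw [if_neg (by rintro ⟨k, h1, -⟩; exact hx k h1)]
        by_cases hy : ∀ k, y ≠ ys k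
        · rw [if_pos ⟨hx, hy⟩, if_pos hy]
        · rw [if_neg (by rintro ⟨-, h2⟩; exact hy h2), if_neg hy]
      rw [Finset.sum_congr rfl fun y _ => key y, ← Finset.sum_filter]
      have : ∑ y ∈ B, p x * q y / s = p x * t / s := by
        rw [ht, Finset.mul_sum, Finset.sum_div]
      rw [hB] at this
      rw [this, ← hst, mul_div_assoc, div_self hspos.ne', mul_one]
  · intro y
    dsimp only
    by_cases hy : ∃ j, y = ys j
    · obtain ⟨j, rfl⟩ := hy
      have key : ∀ x, (if ∃ k, x = xs k ∧ ys j = ys k then p x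
          else if (∀ k, x ≠ xs k) ∧ (∀ k, ys j ≠ ys k) then p x * q (ys j) / s else 0)
          = if x = xs j then p x else 0 := by
        intro x
        by_cases hx : x = xs j
        · subst hx
          rw [if_pos ⟨j, rfl, rfl⟩, if_pos rfl]
        · rw [if_neg, if_neg, if_neg hx]
          · rintro ⟨-, h2⟩; exact h2 j rfl
          · rintro ⟨k, h1, h2⟩; exact hx (by rw [h1, hys h2])
      rw [Finset.sum_congr rfl fun x _ => key x, Finset.sum_ite_eq' univ (xs j)]
      simp [hmass j]
    · push_neg at hy
      have hyB : y ∈ B := by simp [hB, hy]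
      have htpos : 0 < t := Finset.sum_pos (fun i _ => hq0 i) ⟨y, hyB⟩
      have hspos : 0 < s := hst ▸ htpos
      have key : ∀ x, (if ∃ k, x = xs k ∧ y = ys k then p x
          else if (∀ k, x ≠ xs k) ∧ (∀ k, y ≠ ys k) then p x * q y / s else 0)
          = if (∀ k, x ≠ xs k) then p x * q y / s else 0 := by
        intro x
        rw [if_neg (by rintro ⟨k, -, h2⟩; exact hy k h2)]
        by_cases hx : ∀ k, x ≠ xs k
        · rw [if_pos ⟨hx, hy⟩, if_pos hx]
        · rw [if_neg (by rintro ⟨h1, -⟩; exact hx h1), if_neg hx]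
      rw [Finset.sum_congr rfl fun x _ => key x, ← Finset.sum_filter]
      have : ∑ x ∈ A, p x * q y / s = s * q y / s := by
        rw [hs, Finset.sum_mul, Finset.sum_div]
      rw [hA] at this
      rw [this, mul_comm, mul_div_assoc, div_self hspos.ne', mul_one]
  · intro x y h
    have h1 : ¬ ∃ k, x = xs k ∧ y = ys k := fun hc => h (Or.inl hc)
    have h2 : ¬ ((∀ k, x ≠ xs k) ∧ (∀ k, y ≠ ys k)) := fun hc => h (Or.inr hc)
    dsimp only
    rw [if_neg h1, if_neg h2]
end

section
/- Let ε > 0 and let X, Y be finite sets with probability mass functions p, q of full support. For fixed functions u : X → ℝ, v : Y → ℝ and cost c : X×Y → ℝ, define H(x,y) = (1/(2ε))·(u(x) + v(y) − c(x,y))₊ and π(x,y) = H(x,y)p(x)q(y). Then π is the unique minimizer over nonnegative functions ρ on X×Y of the functional G(ρ) = Σ_{x,y} c(x,y)ρ(x,y) + ε Σ_{x,y} ρ(x,y)²/(p(x)q(y)) − Σ_x u(x) Σ_y ρ(x,y) − Σ_y v(y) Σ_x ρ(x,y) (i.e., the Lagrangian of L2-regularized OT with multipliers −u, −v, ignoring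 constant terms). -/
/-! Over `(x, y)` the functional splits into independent quadratics `a t² - b t` with
`a = ε / (p x q y) > 0` and `b = u x + v y - c x y`; on `t ≥ 0` each is strictly minimized at
`b₊ / (2a) = π x y`, so the sum is strictly minimized at `π`. -/

open Finset

lemma quadratic_lt_of_two_mul_eq_max {a b s t : ℝ} (ha : 0 < a) (hs : 2 * a * s = max b 0)
    (ht : 0 ≤ t) (hts : t ≠ s) :
    a * s ^ 2 - b * s < a * t ^ 2 - b * t := by
  have hsq : 0 < a * (t - s) ^ 2 := mul_pos ha (sq_pos_of_ne_zero (sub_ne_zero.mpr hts))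
  have hslack : 0 ≤ (max b 0 - b) * (t - s) := by
    rcases le_or_gt b 0 with hb | hb
    · have hs0 : s = 0 := by nlinarith [max_eq_right hb]
      rw [max_eq_right hb, hs0]
      nlinarith
    · simp [max_eq_left hb.le]
  calc a * s ^ 2 - b * s
      < a * s ^ 2 - b * s + a * (t - s) ^ 2 + (max b 0 - b) * (t - s) := by linarith
    _ = a * t ^ 2 - b * t := by rw [← hs]; ring

lemma sum_le_sum_and_eq_of_lt_of_ne {ι : Type*} [Fintype ι] (f : ι → ℝ → ℝ) (s t : ι → ℝ)
    (h : ∀ i, t i ≠ s i → f i (s i) < f i (t i)) :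
    ∑ i, f i (s i) ≤ ∑ i, f i (t i) ∧ (∑ i, f i (t i) = ∑ i, f i (s i) → t = s) := by
  have hle : ∀ i ∈ univ, f i (s i) ≤ f i (t i) := fun i _ => by
    by_cases hi : t i = s i
    · rw [hi]
    · exact (h i hi).le
  refine ⟨sum_le_sum hle, fun heq => ?_⟩
  by_contra hne
  obtain ⟨i, hi⟩ := Function.ne_iff.mp hne
  exact heq.not_gt (sum_lt_sum hle ⟨i, mem_univ i, h i hi⟩)

lemma l2_lagrangian_eq_sum_prod {X Y : Type*} [Fintype X] [Fintype Y]
    (p : X → ℝ) (q : Y → ℝ) (ε : ℝ) (u : X → ℝ) (v : Y → ℝ) (c ρ : X → Y → ℝ) :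
    ∑ x, ∑ y, c x y * ρ x y + ε * ∑ x, ∑ y, ρ x y ^ 2 / (p x * q y)
        - ∑ x, u x * ∑ y, ρ x y - ∑ y, v y * ∑ x, ρ x y
      = ∑ z : X × Y, (ε / (p z.1 * q z.2) * ρ z.1 z.2 ^ 2
          - (u z.1 + v z.2 - c z.1 z.2) * ρ z.1 z.2) := by
  simp only [Fintype.sum_prod_type, mul_sum]
  rw [sum_comm (f := fun y x => v y * ρ x y)]
  simp only [← sum_sub_distrib, ← sum_add_distrib]
  refine sum_congr rfl fun x _ => sum_congr rfl fun y _ => ?_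
  ring

theorem stmt17 {X Y : Type*} [Fintype X] [Fintype Y]
    (p : X → ℝ) (q : Y → ℝ) (hp : ∀ x, 0 < p x) (hq : ∀ y, 0 < q y)
    (ε : ℝ) (hε : 0 < ε) (u : X → ℝ) (v : Y → ℝ) (c : X → Y → ℝ)
    (H : X → Y → ℝ) (hH : ∀ x y, H x y = (1 / (2 * ε)) * max (u x + v y - c x y) 0)
    (π : X → Y → ℝ) (hπ : ∀ x y, π x y = H x y * p x * q y)
    (G : (X → Y → ℝ) → ℝ)
    (hG : ∀ ρ, G ρ = ∑ x, ∑ y, c x y * ρ x y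
      + ε * ∑ x, ∑ y, ρ x y ^ 2 / (p x * q y)
      - ∑ x, u x * ∑ y, ρ x y - ∑ y, v y * ∑ x, ρ x y) :
    (∀ x y, 0 ≤ π x y) ∧
      ∀ ρ : X → Y → ℝ, (∀ x y, 0 ≤ ρ x y) →
        G π ≤ G ρ ∧ (G ρ = G π → ρ = π) := by
  have hπ_nonneg : ∀ x y, 0 ≤ π x y := fun x y => by
    rw [hπ, hH]
    have := hp x; have := hq y
    positivity
  have hfoc : ∀ x y, 2 * (ε / (p x * q y)) * π x y = max (u x + v y - c x y) 0 := fun x y => by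
    rw [hπ, hH]
    field_simp [hε.ne', (hp x).ne', (hq y).ne']
  refine ⟨hπ_nonneg, fun ρ hρ => ?_⟩
  obtain ⟨hle, heq⟩ := sum_le_sum_and_eq_of_lt_of_ne
    (fun (z : X × Y) t => ε / (p z.1 * q z.2) * t ^ 2 - (u z.1 + v z.2 - c z.1 z.2) * t)
    (fun z => π z.1 z.2) (fun z => ρ z.1 z.2) fun z hz =>
      quadratic_lt_of_two_mul_eq_max (div_pos hε (mul_pos (hp z.1) (hq z.2)))
        (hfoc z.1 z.2) (hρ z.1 z.2) hz
  rw [hG, hG, l2_lagrangian_eq_sum_prod, l2_lagrangian_eq_sum_prod]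
  exact ⟨hle, fun h => funext₂ fun x y => congrFun (heq h) (x, y)⟩
end
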